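/- There exists a unique real α with 0 < α < 1 such that f(α, 1/α) = 0, where f is the A-polynomial of the 5₂ knot, f(x,y) = 1 + y(−1 + 2x² + 2x⁴ − x⁸ + x¹⁰) + y²(x⁴ − x⁶ + 2x¹⁰ + 2x¹² − x¹⁴) + y³x¹⁴, subject to the additional constraint from the curve C that x < 1 and y > 1; moreover 0.447 < α < 0.448. -/

import Mathlib

/-!
Multiplying by `α`, the equation `f(α, 1/α) = 0` becomes `p(α) = 0` for a degree-13 polynomial `p`
whose derivative is positive on `(0, 1)`: the few negative terms of `p'` are dominated termwise
there. So `p` is strictly increasing on `(0, 1)` and has at most one root in it; the signs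
`p(0.447) < 0 < p(0.448)` and the intermediate value theorem locate it.
-/

def fiveTwoA (x y : ℝ) : ℝ :=
  1 + y * (-1 + 2 * x ^ 2 + 2 * x ^ 4 - x ^ 8 + x ^ 10) +
    y ^ 2 * (x ^ 4 - x ^ 6 + 2 * x ^ 10 + 2 * x ^ 12 - x ^ 14) + y ^ 3 * x ^ 14

open Set

namespace StrictMonoOn

variable {f : ℝ → ℝ} {s : Set ℝ} {a b : ℝ}

lemma mem_Ioo_of_eq_zero (hf : StrictMonoOn f s) (ha : a ∈ s) (hb : b ∈ s)
    (hfa : f a < 0) (hfb : 0 < f b) {x : ℝ} (hx : x ∈ s) (hfx : f x = 0) : x ∈ Ioo a b :=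
  ⟨(hf.lt_iff_lt ha hx).mp (hfx ▸ hfa), (hf.lt_iff_lt hx hb).mp (hfx ▸ hfb)⟩

lemma existsUnique_eq_zero (hf : StrictMonoOn f s) (hcont : ContinuousOn f s)
    (hs : s.OrdConnected) (ha : a ∈ s) (hb : b ∈ s) (hfa : f a < 0) (hfb : 0 < f b) :
    ∃! x, x ∈ s ∧ f x = 0 := by
  have hab : a ≤ b := ((hf.lt_iff_lt ha hb).mp (hfa.trans hfb)).le
  obtain ⟨x, hx, hfx⟩ :=
    intermediate_value_Ioo hab (hcont.mono (hs.out ha hb)) ⟨hfa, hfb⟩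
  refine ⟨x, ⟨hs.out ha hb (Ioo_subset_Icc_self hx), hfx⟩, ?_⟩
  rintro y ⟨hy, hfy⟩
  exact hf.injOn hy (hs.out ha hb (Ioo_subset_Icc_self hx)) (hfy.trans hfx.symm)

end StrictMonoOn

def fiveTwoReduced (t : ℝ) : ℝ :=
  -1 + t + 2 * t ^ 2 + t ^ 3 + 2 * t ^ 4 - t ^ 5 - t ^ 8 + 2 * t ^ 9 + t ^ 10 + 2 * t ^ 11
    + t ^ 12 - t ^ 13

lemma fiveTwoA_inv_eq {α : ℝ} (hα : α ≠ 0) : fiveTwoA α α⁻¹ = fiveTwoReduced α / α := by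
  unfold fiveTwoA fiveTwoReduced
  field_simp
  ring

lemma fiveTwoA_inv_eq_zero_iff {α : ℝ} (hα : α ≠ 0) :
    fiveTwoA α α⁻¹ = 0 ↔ fiveTwoReduced α = 0 := by
  rw [fiveTwoA_inv_eq hα, div_eq_zero_iff, or_iff_left hα]

lemma continuous_fiveTwoReduced : Continuous fiveTwoReduced := by
  unfold fiveTwoReduced
  fun_prop

lemma hasDerivAt_fiveTwoReduced (x : ℝ) :
    HasDerivAt fiveTwoReduced
      (1 + 4 * x + 3 * x ^ 2 + 8 * x ^ 3 - 5 * x ^ 4 - 8 * x ^ 7 + 18 * x ^ 8 + 10 * x ^ 9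
        + 22 * x ^ 10 + 12 * x ^ 11 - 13 * x ^ 12) x := by
  have h := (((((((((((hasDerivAt_const x (-1 : ℝ)).add (hasDerivAt_id x)).add
    ((hasDerivAt_pow 2 x).const_mul 2)).add (hasDerivAt_pow 3 x)).add
    ((hasDerivAt_pow 4 x).const_mul 2)).sub (hasDerivAt_pow 5 x)).sub
    (hasDerivAt_pow 8 x)).add ((hasDerivAt_pow 9 x).const_mul 2)).add
    (hasDerivAt_pow 10 x)).add ((hasDerivAt_pow 11 x).const_mul 2)).add
    (hasDerivAt_pow 12 x)).sub (hasDerivAt_pow 13 x)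
  exact h.congr_deriv (by norm_num; ring)

lemma strictMonoOn_fiveTwoReduced : StrictMonoOn fiveTwoReduced (Ioo 0 1) := by
  refine strictMonoOn_of_deriv_pos (convex_Ioo 0 1) continuous_fiveTwoReduced.continuousOn ?_
  rw [interior_Ioo]
  rintro x ⟨hx0, hx1⟩
  rw [(hasDerivAt_fiveTwoReduced x).deriv]
  have hle {m n : ℕ} (hmn : m ≤ n) : x ^ n ≤ x ^ m := pow_le_pow_of_le_one hx0.le hx1.le hmn
  -- `-5x⁴ ≥ -5x³`, `-13x¹² ≥ -13x¹⁰` and `8x⁷ ≤ 1 + 4x + 3x²`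
  have h40 := hle (show 3 ≤ 4 by norm_num)
  have h70 := hle (show 0 ≤ 7 by norm_num)
  have h71 := hle (show 1 ≤ 7 by norm_num)
  have h72 := hle (show 2 ≤ 7 by norm_num)
  have h120 := hle (show 10 ≤ 12 by norm_num)
  simp only [pow_zero, pow_one] at h70 h71
  linarith [pow_pos hx0 3, pow_pos hx0 8, pow_pos hx0 9, pow_pos hx0 10, pow_pos hx0 11]

lemma fiveTwoReduced_lower : fiveTwoReduced 0.447 < 0 := by norm_num [fiveTwoReduced]

lemma fiveTwoReduced_upper : 0 < fiveTwoReduced 0.448 := by norm_num [fiveTwoReduced]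

theorem stmt_7 :
    (∃! α : ℝ, 0 < α ∧ α < 1 ∧ fiveTwoA α α⁻¹ = 0) ∧
    (∀ α : ℝ, 0 < α → α < 1 → fiveTwoA α α⁻¹ = 0 → 0.447 < α ∧ α < 0.448) := by
  have hroot (α : ℝ) :
      (0 < α ∧ α < 1 ∧ fiveTwoA α α⁻¹ = 0) ↔ (α ∈ Ioo 0 1 ∧ fiveTwoReduced α = 0) := by
    refine ⟨fun ⟨h0, h1, h⟩ ↦ ⟨⟨h0, h1⟩, ?_⟩, fun ⟨⟨h0, h1⟩, h⟩ ↦ ⟨h0, h1, ?_⟩⟩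
    · exact (fiveTwoA_inv_eq_zero_iff h0.ne').mp h
    · exact (fiveTwoA_inv_eq_zero_iff h0.ne').mpr h
  have hlower : (0.447 : ℝ) ∈ Ioo 0 1 := by norm_num
  have hupper : (0.448 : ℝ) ∈ Ioo 0 1 := by norm_num
  refine ⟨?_, fun α h0 h1 h ↦ ?_⟩
  · simp_rw [hroot]
    exact strictMonoOn_fiveTwoReduced.existsUnique_eq_zero
      continuous_fiveTwoReduced.continuousOn ordConnected_Ioo hlower hupper
      fiveTwoReduced_lower fiveTwoReduced_upper
  · obtain ⟨hα, hzero⟩ := (hroot α).mp ⟨h0, h1, h⟩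
    exact strictMonoOn_fiveTwoReduced.mem_Ioo_of_eq_zero hlower hupper
      fiveTwoReduced_lower fiveTwoReduced_upper hα hzero
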